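/- Assume q ≡ 1 (mod 4). Let p be a point of the conic O. Then there exists a finite set M of internal points with |M| odd such that for every external point q on the tangent line p⊥, the number of points p' ∈ M for which the line through q and p' is a passant line is odd. -/

import Mathlib

/- Setting: `K` is a finite field of odd order `q`.  Points and lines of
`PG(2,q)` are both represented as points of the projectivization of `K^3`
(homogeneous coordinates), with incidence given by vanishing of the dot
product.  `O` is the conic `X1^2 - X0*X2 = 0`. -/

open scoped Classical

noncomputable section

namespace ConicCode

variable (K : Type*) [Field K] [Fintype K]

abbrev Pt := Projectivization K (Fin 3 → K)

instance : Finite (Pt K) := Quotient.finite _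

noncomputable instance : Fintype (Pt K) := Fintype.ofFinite _

variable {K}

/-- Dot product of two coordinate triples. -/
def dotV (v w : Fin 3 → K) : K := v 0 * w 0 + v 1 * w 1 + v 2 * w 2

/-- Incidence between a point and a line (both given by projective triples). -/
def Incid (p ℓ : Pt K) : Prop := dotV p.rep ℓ.rep = 0

/-- Membership in the conic `O` defined by `X1^2 - X0*X2`. -/
def OnConic (p : Pt K) : Prop := p.rep 1 ^ 2 - p.rep 0 * p.rep 2 = 0

/-- A tangent line meets `O` in exactly one point. -/
def Tangent (ℓ : Pt K) : Prop := {p : Pt K | OnConic p ∧ Incid p ℓ}.ncard = 1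

/-- A secant line meets `O` in exactly two points. -/
def Secant (ℓ : Pt K) : Prop := {p : Pt K | OnConic p ∧ Incid p ℓ}.ncard = 2

/-- A passant line misses `O`. -/
def Passant (ℓ : Pt K) : Prop := {p : Pt K | OnConic p ∧ Incid p ℓ}.ncard = 0

/-- An external point lies on exactly two tangent lines. -/
def External (p : Pt K) : Prop := {ℓ : Pt K | Tangent ℓ ∧ Incid p ℓ}.ncard = 2

/-- An internal point lies on no tangent line. -/
def Internal (p : Pt K) : Prop := {ℓ : Pt K | Tangent ℓ ∧ Incid p ℓ}.ncard = 0


/-- Coordinates of the polar line of the point `(a0,a1,a2)`: `[-a2/2, a1, -a0/2]`. -/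
def perpVec (v : Fin 3 → K) : Fin 3 → K := ![-(v 2) / 2, v 1, -(v 0) / 2]

/-- The polarity `⊥` induced by the conic `O`.  (In odd characteristic
`perpVec` of a nonzero vector is nonzero, so the `else` branch is never
taken.) -/
def perp (p : Pt K) : Pt K :=
  if h : perpVec p.rep ≠ 0 then Projectivization.mk K _ h else p

/-- Cross product: coordinates of the line through two distinct points. -/
def crossVec (v w : Fin 3 → K) : Fin 3 → K :=
  ![v 1 * w 2 - v 2 * w 1, v 2 * w 0 - v 0 * w 2, v 0 * w 1 - v 1 * w 0]

/-- The line through two distinct points (junk value if the points coincide). -/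
def lineThrough (p q : Pt K) : Pt K :=
  if h : crossVec p.rep q.rep ≠ 0 then Projectivization.mk K _ h else p

/-- The intersection point of two distinct lines (junk value if they coincide). -/
def meetPt (l m : Pt K) : Pt K := lineThrough l m

set_option linter.unusedSectionVars false
set_option maxHeartbeats 1000000

def Qf (v : Fin 3 → K) : K := v 1 ^ 2 - v 0 * v 2
def Bf (v w : Fin 3 → K) : K := 2 * v 1 * w 1 - v 0 * w 2 - v 2 * w 0
def dsc (b : Fin 3 → K) : K := b 1 ^ 2 - 4 * b 0 * b 2


lemma onConic_iff (x : Pt K) : OnConic x ↔ Qf x.rep = 0 := Iff.rfl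

lemma vec_eq_zero_iff (v : Fin 3 → K) : v = 0 ↔ v 0 = 0 ∧ v 1 = 0 ∧ v 2 = 0 := by
  constructor
  · rintro rfl; simp
  · rintro ⟨h0, h1, h2⟩; funext i; fin_cases i <;> assumption

lemma smul_comp (c : K) (v : Fin 3 → K) (i : Fin 3) : (c • v) i = c * v i := rfl

lemma Qf_smul (c : K) (v : Fin 3 → K) : Qf (c • v) = c ^ 2 * Qf v := by
  simp only [Qf, smul_comp]; ring
lemma dotV_smul_right (c : K) (v w : Fin 3 → K) : dotV v (c • w) = c * dotV v w := by
  simp only [dotV, smul_comp]; ring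
lemma dotV_smul_left (c : K) (v w : Fin 3 → K) : dotV (c • v) w = c * dotV v w := by
  simp only [dotV, smul_comp]; ring

/-- rep of a `mk` is a nonzero multiple of the vector. -/
lemma rep_mk (v : Fin 3 → K) (hv : v ≠ 0) :
    ∃ c : K, c ≠ 0 ∧ (Projectivization.mk K v hv).rep = c • v := by
  obtain ⟨u, hu⟩ := Projectivization.exists_smul_eq_mk_rep K v hv
  exact ⟨(u : K), u.ne_zero, by rw [← hu, Units.smul_def]⟩

/-- if the discriminant of a line is a square then some conic point lies on it -/
lemma exists_conic_pt (h2 : (2 : K) ≠ 0) (ℓ : Pt K) (hsq : IsSquare (dsc ℓ.rep)) :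
    ∃ x : Pt K, OnConic x ∧ Incid x ℓ := by
  set b := ℓ.rep with hb
  obtain ⟨d, hd⟩ := hsq
  by_cases hb2 : b 2 = 0
  · -- the point (0,0,1) works
    have hv : (![0, 0, 1] : Fin 3 → K) ≠ 0 := by
      intro h; have := congrFun h 2; simp at this
    refine ⟨Projectivization.mk K ![0, 0, 1] hv, ?_, ?_⟩
    · obtain ⟨c, hc, hrep⟩ := rep_mk ![0, 0, 1] hv
      show Qf _ = 0
      rw [hrep, Qf_smul]
      simp [Qf]
    · obtain ⟨c, hc, hrep⟩ := rep_mk ![0, 0, 1] hv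
      show dotV _ _ = 0
      rw [hrep, dotV_smul_left]
      have : dotV ![0,0,1] b = 0 := by simp [dotV, hb2]
      rw [this, mul_zero]
  · set s : K := (-(b 1) + d) / (2 * b 2) with hs
    have hroot : b 2 * s ^ 2 + b 1 * s + b 0 = 0 := by
      have h4 : (2 * b 2) ≠ 0 := mul_ne_zero h2 hb2
      have hd' : b 1 ^ 2 - 4 * b 0 * b 2 = d * d := hd
      have hs2 : 2 * b 2 * s = -b 1 + d := by rw [hs]; field_simp
      have h40 : 4 * b 2 * (b 2 * s ^ 2 + b 1 * s + b 0) = 0 := by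
        linear_combination (2 * b 2 * s + b 1 + d) * hs2 - hd'
      have h4' : (4 : K) * b 2 ≠ 0 := by
        have : (4 : K) = 2 * 2 := by norm_num
        rw [this]; exact mul_ne_zero (mul_ne_zero h2 h2) hb2
      exact (mul_eq_zero.mp h40).resolve_left h4'
    have hv : (![1, s, s ^ 2] : Fin 3 → K) ≠ 0 := by
      intro h; have := congrFun h 0; simp at this
    refine ⟨Projectivization.mk K ![1, s, s ^ 2] hv, ?_, ?_⟩
    · obtain ⟨c, hc, hrep⟩ := rep_mk ![1, s, s ^ 2] hv
      show Qf _ = 0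
      rw [hrep, Qf_smul]
      simp [Qf]
    · obtain ⟨c, hc, hrep⟩ := rep_mk ![1, s, s ^ 2] hv
      show dotV _ _ = 0
      rw [hrep, dotV_smul_left]
      simp only [dotV]
      have : (![1, s, s^2] : Fin 3 → K) 0 * b 0 + (![1, s, s^2] : Fin 3 → K) 1 * b 1
          + (![1, s, s^2] : Fin 3 → K) 2 * b 2 = 0 := by
        simp; linear_combination hroot
      rw [this, mul_zero]

/-- if a conic point lies on a line then its discriminant is a square -/
lemma isSquare_dsc_of_conic_pt (ℓ x : Pt K) (hx : OnConic x) (hi : Incid x ℓ) :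
    IsSquare (dsc ℓ.rep) := by
  set b := ℓ.rep with hb
  set v := x.rep with hv
  have hQ : v 1 ^ 2 - v 0 * v 2 = 0 := hx
  have hI : v 0 * b 0 + v 1 * b 1 + v 2 * b 2 = 0 := hi
  by_cases h0 : v 0 = 0
  · have h1 : v 1 = 0 := by
      have : v 1 ^ 2 = 0 := by rw [h0] at hQ; linear_combination hQ
      exact pow_eq_zero_iff (n := 2) (by norm_num) |>.mp this
    have h2 : v 2 ≠ 0 := by
      intro h2
      exact x.rep_nonzero ((vec_eq_zero_iff v).2 ⟨h0, h1, h2⟩)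
    have hb2 : b 2 = 0 := by
      rw [h0, h1] at hI; simp at hI
      rcases hI with h | h
      · exact absurd h h2
      · exact h
    exact ⟨b 1, by simp [dsc, hb2]; ring⟩
  · refine ⟨(b 1 * v 0 + 2 * b 2 * v 1) / v 0, ?_⟩
    have key : dsc b * v 0 ^ 2 = (b 1 * v 0 + 2 * b 2 * v 1) ^ 2 := by
      simp only [dsc]
      linear_combination (-4 * b 2 * v 0) * hI + (-4 * b 2 ^ 2) * hQ
    field_simp
    linear_combination key

lemma setfin (s : Set (Pt K)) : s.Finite := Set.toFinite s

/-- Passant iff discriminant is a nonsquare. -/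
lemma passant_iff (h2 : (2 : K) ≠ 0) (ℓ : Pt K) :
    Passant ℓ ↔ ¬ IsSquare (dsc ℓ.rep) := by
  constructor
  · intro hpa hsq
    obtain ⟨x, hx, hi⟩ := exists_conic_pt h2 ℓ hsq
    have hempty : {p : Pt K | OnConic p ∧ Incid p ℓ} = ∅ :=
      (Set.ncard_eq_zero (setfin _)).mp hpa
    exact absurd (show x ∈ {p : Pt K | OnConic p ∧ Incid p ℓ} from ⟨hx, hi⟩) (by rw [hempty]; simp)
  · intro hns
    have hempty : {p : Pt K | OnConic p ∧ Incid p ℓ} = ∅ := by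
      ext x
      simp only [Set.mem_setOf_eq, Set.mem_empty_iff_false, iff_false, not_and]
      intro hx hi
      exact hns (isSquare_dsc_of_conic_pt ℓ x hx hi)
    rw [Passant, hempty]
    simp

/-- A tangent line has zero discriminant. -/
lemma tangent_dsc (h2 : (2 : K) ≠ 0) (ℓ : Pt K) (ht : Tangent ℓ) : dsc ℓ.rep = 0 := by
  by_contra hne
  set b := ℓ.rep with hb
  have hsq : IsSquare (dsc b) := by
    have h1 : {p : Pt K | OnConic p ∧ Incid p ℓ}.Nonempty := by
      rw [← Set.ncard_pos (setfin _), ht]; norm_num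
    obtain ⟨x, hx, hi⟩ := h1
    exact isSquare_dsc_of_conic_pt ℓ x hx hi
  obtain ⟨d, hd⟩ := hsq
  have hdne : d ≠ 0 := by rintro rfl; simp at hd; exact hne hd
  -- construct two distinct conic points on ℓ
  have htwo : ∃ x y : Pt K, (OnConic x ∧ Incid x ℓ) ∧ (OnConic y ∧ Incid y ℓ) ∧ x ≠ y := by
    by_cases hb2 : b 2 = 0
    · have hb1 : b 1 ≠ 0 := by
        intro hb1
        apply hne; simp [dsc, hb1, hb2]
      set m : K := -(b 0) / b 1 with hm
      have hv1 : (![0, 0, 1] : Fin 3 → K) ≠ 0 := by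
        intro h; have := congrFun h 2; simp at this
      have hv2 : (![1, m, m ^ 2] : Fin 3 → K) ≠ 0 := by
        intro h; have := congrFun h 0; simp at this
      refine ⟨Projectivization.mk K ![0,0,1] hv1, Projectivization.mk K ![1, m, m^2] hv2,
        ⟨?_, ?_⟩, ⟨?_, ?_⟩, ?_⟩
      · obtain ⟨c, hc, hrep⟩ := rep_mk ![0,0,1] hv1
        show Qf _ = 0
        rw [hrep, Qf_smul]; simp [Qf]
      · obtain ⟨c, hc, hrep⟩ := rep_mk ![0,0,1] hv1
        show dotV _ _ = 0
        rw [hrep, dotV_smul_left]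
        have : dotV ![0,0,1] b = 0 := by simp [dotV, hb2]
        rw [this, mul_zero]
      · obtain ⟨c, hc, hrep⟩ := rep_mk ![1, m, m^2] hv2
        show Qf _ = 0
        rw [hrep, Qf_smul]; simp [Qf]
      · obtain ⟨c, hc, hrep⟩ := rep_mk ![1, m, m^2] hv2
        show dotV _ _ = 0
        rw [hrep, dotV_smul_left]
        have : dotV ![1, m, m^2] b = 0 := by
          simp [dotV, hb2, hm]; field_simp; ring
        rw [this, mul_zero]
      · intro heq
        rw [Projectivization.mk_eq_mk_iff] at heq
        obtain ⟨a, ha⟩ := heq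
        have := congrFun ha 0
        simp [Units.smul_def] at this
    · set s1 : K := (-(b 1) + d) / (2 * b 2) with hs1
      set s2 : K := (-(b 1) - d) / (2 * b 2) with hs2
      have h4 : (2 * b 2) ≠ 0 := mul_ne_zero h2 hb2
      have hd' : b 1 ^ 2 - 4 * b 0 * b 2 = d * d := hd
      have hss : s1 ≠ s2 := by
        intro h
        rw [hs1, hs2, div_eq_div_iff h4 h4] at h
        have h' := mul_right_cancel₀ h4 h
        have h2d : 2 * d = 0 := by linear_combination h'
        exact hdne ((mul_eq_zero.mp h2d).resolve_left h2)
      have hroot : ∀ s : K, 2 * b 2 * s = -b 1 + d ∨ 2 * b 2 * s = -b 1 - d →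
          b 2 * s ^ 2 + b 1 * s + b 0 = 0 := by
        intro s hcase
        have h40 : 4 * b 2 * (b 2 * s ^ 2 + b 1 * s + b 0) = 0 := by
          rcases hcase with h | h
          · linear_combination (2 * b 2 * s + b 1 + d) * h - hd'
          · linear_combination (2 * b 2 * s + b 1 - d) * h - hd'
        have h4' : (4 : K) * b 2 ≠ 0 := by
          have : (4 : K) = 2 * 2 := by norm_num
          rw [this]; exact mul_ne_zero (mul_ne_zero h2 h2) hb2
        exact (mul_eq_zero.mp h40).resolve_left h4'
      have hv1 : (![1, s1, s1 ^ 2] : Fin 3 → K) ≠ 0 := by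
        intro h; have := congrFun h 0; simp at this
      have hv2 : (![1, s2, s2 ^ 2] : Fin 3 → K) ≠ 0 := by
        intro h; have := congrFun h 0; simp at this
      have hr1 : b 2 * s1 ^ 2 + b 1 * s1 + b 0 = 0 :=
        hroot s1 (Or.inl (by rw [hs1]; field_simp))
      have hr2 : b 2 * s2 ^ 2 + b 1 * s2 + b 0 = 0 :=
        hroot s2 (Or.inr (by rw [hs2]; field_simp))
      refine ⟨Projectivization.mk K ![1,s1,s1^2] hv1, Projectivization.mk K ![1,s2,s2^2] hv2,
        ⟨?_, ?_⟩, ⟨?_, ?_⟩, ?_⟩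
      · obtain ⟨c, hc, hrep⟩ := rep_mk ![1,s1,s1^2] hv1
        show Qf _ = 0
        rw [hrep, Qf_smul]; simp [Qf]
      · obtain ⟨c, hc, hrep⟩ := rep_mk ![1,s1,s1^2] hv1
        show dotV _ _ = 0
        rw [hrep, dotV_smul_left]
        have : dotV ![1,s1,s1^2] b = 0 := by
          simp [dotV]; linear_combination hr1
        rw [this, mul_zero]
      · obtain ⟨c, hc, hrep⟩ := rep_mk ![1,s2,s2^2] hv2
        show Qf _ = 0
        rw [hrep, Qf_smul]; simp [Qf]
      · obtain ⟨c, hc, hrep⟩ := rep_mk ![1,s2,s2^2] hv2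
        show dotV _ _ = 0
        rw [hrep, dotV_smul_left]
        have : dotV ![1,s2,s2^2] b = 0 := by
          simp [dotV]; linear_combination hr2
        rw [this, mul_zero]
      · intro heq
        rw [Projectivization.mk_eq_mk_iff] at heq
        obtain ⟨a, ha⟩ := heq
        have h0 := congrFun ha 0
        have h1 := congrFun ha 1
        simp [Units.smul_def] at h0 h1
        apply hss
        rw [← h1, h0]; simp
  obtain ⟨x, y, hx, hy, hxy⟩ := htwo
  have : 1 < {p : Pt K | OnConic p ∧ Incid p ℓ}.ncard := by
    rw [Set.one_lt_ncard (setfin _)]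
    exact ⟨x, hx, y, hy, hxy⟩
  rw [ht] at this
  exact lt_irrefl 1 this

/-- a point on a line with zero discriminant has square `Qf`. -/
lemma isSquare_Qf_of_on_tangent (h2 : (2 : K) ≠ 0) (ℓ x : Pt K)
    (hd : dsc ℓ.rep = 0) (hi : Incid x ℓ) : IsSquare (Qf x.rep) := by
  set b := ℓ.rep with hb
  set v := x.rep with hv
  have hd' : b 1 ^ 2 - 4 * b 0 * b 2 = 0 := hd
  have hI : v 0 * b 0 + v 1 * b 1 + v 2 * b 2 = 0 := hi
  by_cases hb2 : b 2 = 0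
  · have hb1 : b 1 = 0 := by
      have : b 1 ^ 2 = 0 := by rw [hb2] at hd'; linear_combination hd'
      exact pow_eq_zero_iff (n := 2) (by norm_num) |>.mp this
    have hb0 : b 0 ≠ 0 := by
      intro hb0
      exact ℓ.rep_nonzero ((vec_eq_zero_iff b).2 ⟨hb0, hb1, hb2⟩)
    have hv0 : v 0 = 0 := by
      rw [hb1, hb2] at hI; simp at hI
      rcases hI with h | h
      · exact h
      · exact absurd h hb0
    exact ⟨v 1, by simp [Qf, hv0]; ring⟩
  · refine ⟨(2 * b 2 * v 1 + b 1 * v 0) / (2 * b 2), ?_⟩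
    have key : Qf v * (2 * b 2) ^ 2 = (2 * b 2 * v 1 + b 1 * v 0) ^ 2 := by
      simp only [Qf]
      linear_combination (-4 * b 2 * v 0) * hI + (-(v 0 ^ 2)) * hd'
    have h4 : (2 * b 2) ≠ 0 := mul_ne_zero h2 hb2
    field_simp
    linear_combination key

/-- A point whose rep has nonsquare `Qf` is internal. -/
lemma internal_of_nonsquare (h2 : (2 : K) ≠ 0) (x : Pt K)
    (h : ¬ IsSquare (Qf x.rep)) : Internal x := by
  have hempty : {ℓ : Pt K | Tangent ℓ ∧ Incid x ℓ} = ∅ := by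
    ext ℓ
    simp only [Set.mem_setOf_eq, Set.mem_empty_iff_false, iff_false, not_and]
    intro ht hi
    exact h (isSquare_Qf_of_on_tangent h2 ℓ x (tangent_dsc h2 ℓ ht) hi)
  rw [Internal, hempty]
  simp

lemma vec_eq_iff (v w : Fin 3 → K) : v = w ↔ (v 0 = w 0 ∧ v 1 = w 1 ∧ v 2 = w 2) := by
  constructor
  · rintro rfl; exact ⟨rfl, rfl, rfl⟩
  · rintro ⟨h0, h1, h2⟩; funext i; fin_cases i <;> assumption

lemma mat0 (a b c : K) : (![a, b, c] : Fin 3 → K) 0 = a := rfl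
lemma mat1 (a b c : K) : (![a, b, c] : Fin 3 → K) 1 = b := rfl
lemma mat2 (a b c : K) : (![a, b, c] : Fin 3 → K) 2 = c := rfl

lemma cross_zero_dep (v w : Fin 3 → K) (hv : v ≠ 0) (hw : w ≠ 0)
    (h : crossVec v w = 0) : ∃ k : K, k ≠ 0 ∧ v = k • w := by
  have h0 : v 1 * w 2 - v 2 * w 1 = 0 := by have := congrFun h 0; simpa [crossVec] using this
  have h1 : v 2 * w 0 - v 0 * w 2 = 0 := by have := congrFun h 1; simpa [crossVec] using this
  have h2 : v 0 * w 1 - v 1 * w 0 = 0 := by have := congrFun h 2; simpa [crossVec] using this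
  have main : ∃ k : K, v = k • w := by
    by_cases hw0 : w 0 ≠ 0
    · refine ⟨v 0 / w 0, ?_⟩
      rw [vec_eq_iff]
      refine ⟨?_, ?_, ?_⟩ <;> simp only [smul_comp] <;>
        rw [div_mul_eq_mul_div, eq_div_iff hw0] <;>
        first
          | ring1
          | linear_combination h2 | linear_combination -h2
          | linear_combination h1 | linear_combination -h1
          | linear_combination h0 | linear_combination -h0
    · by_cases hw1 : w 1 ≠ 0
      · refine ⟨v 1 / w 1, ?_⟩
        rw [vec_eq_iff]
        refine ⟨?_, ?_, ?_⟩ <;> simp only [smul_comp] <;>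
          rw [div_mul_eq_mul_div, eq_div_iff hw1] <;>
          first
            | ring1
            | linear_combination h2 | linear_combination -h2
            | linear_combination h1 | linear_combination -h1
            | linear_combination h0 | linear_combination -h0
      · have hw2 : w 2 ≠ 0 := by
          intro hw2
          push_neg at hw0 hw1
          exact hw ((vec_eq_zero_iff w).2 ⟨hw0, hw1, hw2⟩)
        refine ⟨v 2 / w 2, ?_⟩
        rw [vec_eq_iff]
        refine ⟨?_, ?_, ?_⟩ <;> simp only [smul_comp] <;>
          rw [div_mul_eq_mul_div, eq_div_iff hw2] <;>
          first
            | ring1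
            | linear_combination h2 | linear_combination -h2
            | linear_combination h1 | linear_combination -h1
            | linear_combination h0 | linear_combination -h0
  obtain ⟨k, hk⟩ := main
  refine ⟨k, ?_, hk⟩
  rintro rfl
  apply hv
  rw [hk]
  funext i; simp [smul_comp]

/-- uniqueness of the tangent line through a conic point (vector form). -/
lemma tangent_unique_vec (h2 : (2 : K) ≠ 0) (r b b' : Fin 3 → K) (hr : r ≠ 0)
    (hQ : Qf r = 0) (hb : b ≠ 0) (hb' : b' ≠ 0) (hd : dsc b = 0) (hd' : dsc b' = 0)
    (hi : dotV r b = 0) (hi' : dotV r b' = 0) : ∃ k : K, k ≠ 0 ∧ b = k • b' := by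
  have hQ' : r 1 ^ 2 - r 0 * r 2 = 0 := hQ
  have key : ∀ c : Fin 3 → K, c ≠ 0 → dsc c = 0 → dotV r c = 0 →
      (r 0 ≠ 0 → ∃ k : K, k ≠ 0 ∧ c = k • ![r 1 ^ 2, -(2 * r 0 * r 1), r 0 ^ 2]) ∧
      (r 0 = 0 → c 1 = 0 ∧ c 2 = 0 ∧ c 0 ≠ 0) := by
    intro c hc hdsc hdot
    have hdsc' : c 1 ^ 2 - 4 * c 0 * c 2 = 0 := hdsc
    have hdot' : r 0 * c 0 + r 1 * c 1 + r 2 * c 2 = 0 := hdot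
    constructor
    · intro hr0
      have hsq : (r 0 * c 1 + 2 * r 1 * c 2) ^ 2 = 0 := by
        linear_combination (r 0 ^ 2) * hdsc' + (4 * c 2 * r 0) * hdot' + (4 * c 2 ^ 2) * hQ'
      have hc1 : r 0 * c 1 + 2 * r 1 * c 2 = 0 :=
        pow_eq_zero_iff (n := 2) (by norm_num) |>.mp hsq
      have hc0 : r 0 ^ 2 * c 0 = r 1 ^ 2 * c 2 := by
        linear_combination r 0 * hdot' - r 1 * hc1 + c 2 * hQ'
      have hr02 : r 0 ^ 2 ≠ 0 := pow_ne_zero 2 hr0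
      have hc2ne : c 2 ≠ 0 := by
        intro hc2
        apply hc
        rw [vec_eq_zero_iff]
        refine ⟨?_, ?_, hc2⟩
        · have h' : r 0 ^ 2 * c 0 = 0 := by rw [hc0, hc2]; ring
          exact (mul_eq_zero.mp h').resolve_left hr02
        · have h' : r 0 * c 1 = 0 := by linear_combination hc1 - (2 * r 1) * hc2
          exact (mul_eq_zero.mp h').resolve_left hr0
      refine ⟨c 2 / r 0 ^ 2, div_ne_zero hc2ne hr02, ?_⟩
      rw [vec_eq_iff]
      refine ⟨?_, ?_, ?_⟩ <;> simp only [smul_comp, mat0, mat1, mat2] <;>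
        rw [div_mul_eq_mul_div, eq_div_iff hr02] <;>
        first
          | ring1
          | linear_combination hc0 | linear_combination -hc0
          | linear_combination r 0 * hc1 | linear_combination (-(r 0)) * hc1
    · intro hr0
      have hr1 : r 1 = 0 := by
        have h' : r 1 ^ 2 = 0 := by rw [hr0] at hQ'; linear_combination hQ'
        exact pow_eq_zero_iff (n := 2) (by norm_num) |>.mp h'
      have hr2 : r 2 ≠ 0 := by
        intro hr2; exact hr ((vec_eq_zero_iff r).2 ⟨hr0, hr1, hr2⟩)
      have hc2 : c 2 = 0 := by
        rw [hr0, hr1] at hdot'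
        have h' : r 2 * c 2 = 0 := by linear_combination hdot'
        exact (mul_eq_zero.mp h').resolve_left hr2
      have hc1 : c 1 = 0 := by
        have h' : c 1 ^ 2 = 0 := by rw [hc2] at hdsc'; linear_combination hdsc'
        exact pow_eq_zero_iff (n := 2) (by norm_num) |>.mp h'
      refine ⟨hc1, hc2, ?_⟩
      intro hc0
      exact hc ((vec_eq_zero_iff c).2 ⟨hc0, hc1, hc2⟩)
  by_cases hr0 : r 0 ≠ 0
  · obtain ⟨k, hk, hkeq⟩ := (key b hb hd hi).1 hr0
    obtain ⟨k', hk', hkeq'⟩ := (key b' hb' hd' hi').1 hr0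
    refine ⟨k / k', div_ne_zero hk hk', ?_⟩
    rw [hkeq, hkeq', vec_eq_iff]
    refine ⟨?_, ?_, ?_⟩ <;> simp only [smul_comp, mat0, mat1, mat2] <;>
      rw [div_mul_eq_mul_div, eq_div_iff hk'] <;> ring
  · push_neg at hr0
    obtain ⟨hb1, hb2, hb0⟩ := (key b hb hd hi).2 hr0
    obtain ⟨hb1', hb2', hb0'⟩ := (key b' hb' hd' hi').2 hr0
    refine ⟨b 0 / b' 0, div_ne_zero hb0 hb0', ?_⟩
    rw [vec_eq_iff]
    refine ⟨?_, ?_, ?_⟩ <;> simp only [smul_comp]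
    · rw [div_mul_eq_mul_div, eq_div_iff hb0']
    · rw [hb1, hb1']; ring
    · rw [hb2, hb2']; ring

/-- a conic point is not external -/
lemma not_external_conic (h2 : (2 : K) ≠ 0) (p : Pt K) (hp : OnConic p) :
    ¬ External p := by
  intro hext
  have h12 : 1 < {ℓ : Pt K | Tangent ℓ ∧ Incid p ℓ}.ncard := by rw [hext]; norm_num
  rw [Set.one_lt_ncard (setfin _)] at h12
  obtain ⟨ℓ, ⟨hℓt, hℓi⟩, ℓ', ⟨hℓt', hℓi'⟩, hne⟩ := h12
  obtain ⟨k, hk, hkeq⟩ := tangent_unique_vec h2 p.rep ℓ.rep ℓ'.rep p.rep_nonzero hp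
    ℓ.rep_nonzero ℓ'.rep_nonzero (tangent_dsc h2 ℓ hℓt) (tangent_dsc h2 ℓ' hℓt') hℓi hℓi'
  apply hne
  conv_lhs => rw [← ℓ.mk_rep]
  conv_rhs => rw [← ℓ'.mk_rep]
  rw [Projectivization.mk_eq_mk_iff]
  refine ⟨Units.mk0 k hk, ?_⟩
  rw [Units.smul_def, Units.val_mk0]
  exact hkeq.symm

/-- a point on the tangent at a conic point which itself lies on the conic is that point. -/
lemma pt_on_tangent_conic (uu vv : K) (hUV : ¬(uu = 0 ∧ vv = 0)) (a : Fin 3 → K) (ha : a ≠ 0)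
    (hQ : Qf a = 0) (hB : Bf ![uu^2, uu*vv, vv^2] a = 0) :
    ∃ k : K, k ≠ 0 ∧ a = k • ![uu^2, uu*vv, vv^2] := by
  have hQ' : a 1 ^ 2 - a 0 * a 2 = 0 := hQ
  have hB' : 2 * (uu * vv) * a 1 - uu ^ 2 * a 2 - vv ^ 2 * a 0 = 0 := by
    have h' := hB; simp only [Bf, mat0, mat1, mat2] at h'; linear_combination h'
  by_cases ha0 : a 0 ≠ 0
  · have hsq : (uu * a 1 - vv * a 0) ^ 2 = 0 := by
      linear_combination uu ^ 2 * hQ' + (-(a 0)) * hB'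
    have hva : uu * a 1 - vv * a 0 = 0 := pow_eq_zero_iff (n := 2) (by norm_num) |>.mp hsq
    have hu : uu ≠ 0 := by
      rintro rfl
      have h' : vv * a 0 = 0 := by linear_combination -hva
      rcases mul_eq_zero.mp h' with h'' | h''
      · exact hUV ⟨rfl, h''⟩
      · exact ha0 h''
    have ha2 : uu ^ 2 * a 2 = vv ^ 2 * a 0 := by
      have h' : a 0 * (uu ^ 2 * a 2 - vv ^ 2 * a 0) = 0 := by
        linear_combination (-(uu ^ 2)) * hQ' + (uu * a 1 + vv * a 0) * hva
      have h'' := (mul_eq_zero.mp h').resolve_left ha0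
      linear_combination h''
    have hu2 : uu ^ 2 ≠ 0 := pow_ne_zero 2 hu
    refine ⟨a 0 / uu ^ 2, div_ne_zero ha0 hu2, ?_⟩
    rw [vec_eq_iff]
    refine ⟨?_, ?_, ?_⟩ <;> simp only [smul_comp, mat0, mat1, mat2] <;>
      rw [div_mul_eq_mul_div, eq_div_iff hu2] <;>
      first
        | ring1
        | linear_combination uu * hva | linear_combination (-(uu)) * hva
        | linear_combination ha2 | linear_combination -ha2
  · push_neg at ha0
    have ha1 : a 1 = 0 := by
      have h' : a 1 ^ 2 = 0 := by rw [ha0] at hQ'; linear_combination hQ'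
      exact pow_eq_zero_iff (n := 2) (by norm_num) |>.mp h'
    have ha2 : a 2 ≠ 0 := by
      intro h'; exact ha ((vec_eq_zero_iff a).2 ⟨ha0, ha1, h'⟩)
    have hu : uu = 0 := by
      rw [ha0, ha1] at hB'
      have h' : uu ^ 2 * a 2 = 0 := by linear_combination -hB'
      rcases mul_eq_zero.mp h' with h'' | h''
      · exact pow_eq_zero_iff (n := 2) (by norm_num) |>.mp h''
      · exact absurd h'' ha2
    have hv : vv ≠ 0 := fun h' => hUV ⟨hu, h'⟩
    have hv2 : vv ^ 2 ≠ 0 := pow_ne_zero 2 hv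
    refine ⟨a 2 / vv ^ 2, div_ne_zero ha2 hv2, ?_⟩
    rw [vec_eq_iff]
    refine ⟨?_, ?_, ?_⟩ <;> simp only [smul_comp, mat0, mat1, mat2, hu] <;>
      first
        | (rw [ha0]; ring)
        | (rw [ha1]; ring)
        | (rw [div_mul_eq_mul_div, eq_div_iff hv2])


lemma Bf_smul_left (c : K) (v w : Fin 3 → K) : Bf (c • v) w = c * Bf v w := by
  simp only [Bf, smul_comp]; ring

lemma Bf_smul_right (c : K) (v w : Fin 3 → K) : Bf v (c • w) = c * Bf v w := by
  simp only [Bf, smul_comp]; ring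

lemma dsc_smul (c : K) (v : Fin 3 → K) : dsc (c • v) = c ^ 2 * dsc v := by
  simp only [dsc, smul_comp]; ring

lemma crossVec_smul_right (c : K) (v w : Fin 3 → K) :
    crossVec v (c • w) = c • crossVec v w := by
  funext i; fin_cases i <;> simp [crossVec, smul_comp] <;> ring

lemma dsc_cross (v w : Fin 3 → K) :
    dsc (crossVec v w) = Bf v w ^ 2 - 4 * Qf v * Qf w := by
  simp only [dsc, crossVec, mat0, mat1, mat2, Bf, Qf]; ring

lemma isSquare_sq_mul (k x : K) (hk : k ≠ 0) : IsSquare (k ^ 2 * x) ↔ IsSquare x := by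
  constructor
  · rintro ⟨y, hy⟩
    exact ⟨y / k, by field_simp; linear_combination hy⟩
  · rintro ⟨y, hy⟩
    exact ⟨k * y, by rw [hy]; ring⟩

lemma perpVec_ne (h2 : (2 : K) ≠ 0) (v : Fin 3 → K) (hv : v ≠ 0) : perpVec v ≠ 0 := by
  intro h
  apply hv
  rw [vec_eq_zero_iff] at h ⊢
  obtain ⟨h0, h1', h2'⟩ := h
  simp only [perpVec, mat0, mat1, mat2] at h0 h1' h2'
  refine ⟨?_, h1', ?_⟩
  · rcases div_eq_zero_iff.mp h2' with h' | h'
    · exact neg_eq_zero.mp h'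
    · exact absurd h' h2
  · rcases div_eq_zero_iff.mp h0 with h' | h'
    · exact neg_eq_zero.mp h'
    · exact absurd h' h2

lemma incid_perp (h2 : (2 : K) ≠ 0) (p q0 : Pt K) (h : Incid q0 (perp p)) :
    Bf p.rep q0.rep = 0 := by
  have hpv : perpVec p.rep ≠ 0 := perpVec_ne h2 p.rep p.rep_nonzero
  unfold perp at h
  rw [dif_pos hpv] at h
  obtain ⟨c, hc, hrep⟩ := rep_mk (perpVec p.rep) hpv
  rw [Incid, hrep, dotV_smul_right] at h
  have hdot : dotV q0.rep (perpVec p.rep) = 0 := by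
    rcases mul_eq_zero.mp h with h' | h'
    · exact absurd h' hc
    · exact h'
  simp only [dotV, perpVec, mat0, mat1, mat2] at hdot
  field_simp at hdot
  simp only [Bf]
  linear_combination hdot

def cvec (n0 uu vv e1 e2 β : K) : Fin 3 → K :=
  ![(β * uu + e1) ^ 2 - n0 * (uu * e2 - vv * e1) ^ 2 * uu ^ 2,
    (β * uu + e1) * (β * vv + e2) - n0 * (uu * e2 - vv * e1) ^ 2 * (uu * vv),
    (β * vv + e2) ^ 2 - n0 * (uu * e2 - vv * e1) ^ 2 * vv ^ 2]

lemma Qf_cvec (n0 uu vv e1 e2 β : K) :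
    Qf (cvec n0 uu vv e1 e2 β) = n0 * (uu * e2 - vv * e1) ^ 4 := by
  simp only [cvec, Qf, mat0, mat1, mat2]; ring

lemma Bf_w_cvec (n0 uu vv e1 e2 β : K) :
    Bf ![uu^2, uu*vv, vv^2] (cvec n0 uu vv e1 e2 β) = -(uu * e2 - vv * e1) ^ 2 := by
  simp only [cvec, Bf, mat0, mat1, mat2]; ring

lemma Bf_a_cvec (n0 uu vv e1 e2 β : K) (a : Fin 3 → K)
    (hBwa : Bf ![uu^2, uu*vv, vv^2] a = 0) :
    Bf a (cvec n0 uu vv e1 e2 β) =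
      -((2 * (a 2 * uu * e1 + a 0 * vv * e2 - a 1 * (uu * e2 + vv * e1))) * β
        + (a 2 * e1 ^ 2 + a 0 * e2 ^ 2 - 2 * a 1 * e1 * e2)) := by
  have hBwa' : 2 * (uu * vv) * a 1 - uu ^ 2 * a 2 - vv ^ 2 * a 0 = 0 := by
    simp only [Bf, mat0, mat1, mat2] at hBwa; linear_combination hBwa
  simp only [cvec, Bf, mat0, mat1, mat2]
  linear_combination (β ^ 2 - n0 * (uu * e2 - vv * e1) ^ 2) * hBwa'

lemma bb_sq (uu vv e1 e2 : K) (a : Fin 3 → K)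
    (hBwa : Bf ![uu^2, uu*vv, vv^2] a = 0) :
    (2 * (a 2 * uu * e1 + a 0 * vv * e2 - a 1 * (uu * e2 + vv * e1))) ^ 2
      = 4 * Qf a * (uu * e2 - vv * e1) ^ 2 := by
  have hBwa' : 2 * (uu * vv) * a 1 - uu ^ 2 * a 2 - vv ^ 2 * a 0 = 0 := by
    simp only [Bf, mat0, mat1, mat2] at hBwa; linear_combination hBwa
  simp only [Qf]
  linear_combination (-(4 * (a 2 * e1 ^ 2 + a 0 * e2 ^ 2 - 2 * a 1 * e1 * e2))) * hBwa'

lemma odd_card_of_nat_cast (n : ℕ) (h : (n : ZMod 2) = 1) : Odd n := by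
  rw [Nat.odd_iff]
  have h2 : ((n % 2 : ℕ) : ZMod 2) = 1 := by rwa [ZMod.natCast_mod]
  have : n % 2 < 2 := Nat.mod_lt _ (by norm_num)
  interval_cases h' : n % 2 <;> simp_all

lemma odd_filter_card (h2 : (2 : K) ≠ 0) (bb CC m : K) (hbb : bb ≠ 0)
    (hm : ¬ IsSquare (-m)) :
    Odd (Finset.univ.filter (fun β : K => ¬ IsSquare ((bb * β + CC) ^ 2 - m))).card := by
  set S := Finset.univ.filter (fun β : K => ¬ IsSquare ((bb * β + CC) ^ 2 - m)) with hS
  set βs : K := -CC / bb with hβs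
  have hβsval : bb * βs + CC = 0 := by rw [hβs]; field_simp; ring
  have hstar : βs ∈ S := by
    rw [hS, Finset.mem_filter]
    refine ⟨Finset.mem_univ _, ?_⟩
    rw [hβsval]
    simpa using hm
  set ι : K → K := fun β => -(2 * CC) / bb - β with hι
  have hιval : ∀ β, bb * ι β + CC = -(bb * β + CC) := by
    intro β; rw [hι]; field_simp; ring
  have hιι : ∀ β, ι (ι β) = β := by intro β; rw [hι]; ring
  have hιfix : ∀ β, ι β = β → β = βs := by
    intro β h
    have h' : bb * ι β + CC = bb * β + CC := by rw [h]
    rw [hιval] at h'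
    have h'' : 2 * (bb * β + CC) = 0 := by linear_combination -h'
    have h3 : bb * β + CC = 0 := by
      rcases mul_eq_zero.mp h'' with h | h
      · exact absurd h h2
      · exact h
    rw [hβs, eq_div_iff hbb]
    linear_combination h3
  have hιmem : ∀ β, β ∈ S → ι β ∈ S := by
    intro β hβ
    rw [hS, Finset.mem_filter] at hβ ⊢
    refine ⟨Finset.mem_univ _, ?_⟩
    rw [hιval]
    have : (-(bb * β + CC)) ^ 2 - m = (bb * β + CC) ^ 2 - m := by ring
    rw [this]
    exact hβ.2
  set T := S.erase βs with hT
  have hTsum : ∑ _x ∈ T, (1 : ZMod 2) = 0 := by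
    apply Finset.sum_involution (fun β _ => ι β)
    · intro a ha; decide
    · intro a ha _
      intro h
      have := hιfix a h
      rw [hT, Finset.mem_erase] at ha
      exact ha.1 this
    · intro a ha
      rw [hT, Finset.mem_erase] at ha ⊢
      refine ⟨?_, hιmem a ha.2⟩
      intro h
      have : a = ι βs := by rw [← h, hιι]
      have hβsfix : ι βs = βs := by
        rw [hι, hβs]; field_simp; ring
      rw [hβsfix] at this
      exact ha.1 this
    · intro a ha; exact hιι a
  have hTcard : ((T.card : ZMod 2)) = 0 := by
    rw [← hTsum]
    simp [Finset.sum_const]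
  have hcard : S.card = T.card + 1 := (Finset.card_erase_add_one hstar).symm
  apply odd_card_of_nat_cast
  rw [hcard]
  push_cast
  rw [hTcard]
  norm_num



/-- for `q ≡ 1 (mod 4)` and `p` a point of the conic `O`, there
is a finite set `M` of internal points of odd size such that every external
point `q0` on the tangent line `p⊥` is joined to an odd number of points of
`M` by passant lines. -/
theorem exists_odd_internal_set_for_tangent
    (K : Type*) [Field K] [Fintype K] (hodd : Odd (Fintype.card K))
    (h1 : Fintype.card K % 4 = 1) (p : Pt K) (hp : OnConic p) :
    ∃ M : Finset (Pt K), (∀ x ∈ M, Internal x) ∧ Odd M.card ∧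
      ∀ q0 : Pt K, External q0 → Incid q0 (perp p) →
        Odd (M.filter (fun x => Passant (lineThrough q0 x))).card := by
  classical
  have hch : ringChar K ≠ 2 := by
    intro hc
    have he := (FiniteField.even_card_iff_char_two (F := K)).mp hc
    rw [Nat.odd_iff] at hodd; omega
  have h2 : (2 : K) ≠ 0 := by
    intro h2
    apply hch
    have h2' : ((2 : ℕ) : K) = 0 := by exact_mod_cast h2
    have hdvd := (CharP.cast_eq_zero_iff K (ringChar K) 2).mp h2'
    have hpr : (ringChar K).Prime := CharP.char_is_prime K (ringChar K)
    exact (Nat.prime_dvd_prime_iff_eq hpr Nat.prime_two).mp hdvd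
  have hm1 : IsSquare (-1 : K) := by
    rw [FiniteField.isSquare_neg_one_iff]; omega
  obtain ⟨i, hi⟩ := hm1
  have hine : i ≠ 0 := by
    have h1ne : (-1 : K) ≠ 0 := by simp
    rintro rfl
    apply h1ne; rw [hi]; ring
  obtain ⟨n0, hn0⟩ := FiniteField.exists_nonsquare (F := K) hch
  have hn0ne : n0 ≠ 0 := by rintro rfl; exact hn0 ⟨0, by ring⟩
  have hQr : Qf p.rep = 0 := hp
  obtain ⟨uu, vv, ρ, hρ, hw⟩ : ∃ uu vv ρ : K, ρ ≠ 0 ∧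
      (![uu^2, uu*vv, vv^2] : Fin 3 → K) = ρ • p.rep := by
    by_cases h0 : p.rep 0 = 0
    · have hQr' : p.rep 1 ^ 2 - p.rep 0 * p.rep 2 = 0 := hQr
      have h1 : p.rep 1 = 0 := by
        have hsq : p.rep 1 ^ 2 = 0 := by rw [h0] at hQr'; linear_combination hQr'
        exact pow_eq_zero_iff (n := 2) (by norm_num) |>.mp hsq
      have h2' : p.rep 2 ≠ 0 := by
        intro h; exact p.rep_nonzero ((vec_eq_zero_iff _).2 ⟨h0, h1, h⟩)
      refine ⟨0, p.rep 2, p.rep 2, h2', ?_⟩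
      rw [vec_eq_iff]
      refine ⟨?_, ?_, ?_⟩ <;> simp only [smul_comp, mat0, mat1, mat2] <;>
        first
          | ring1
          | (rw [h0]; ring)
          | (rw [h1]; ring)
    · refine ⟨p.rep 0, p.rep 1, p.rep 0, h0, ?_⟩
      rw [vec_eq_iff]
      have hQr' : p.rep 1 ^ 2 - p.rep 0 * p.rep 2 = 0 := hQr
      refine ⟨?_, ?_, ?_⟩ <;> simp only [smul_comp, mat0, mat1, mat2] <;>
        first
          | ring1
          | linear_combination hQr'
  obtain ⟨e1, e2, hD⟩ : ∃ e1 e2 : K, uu * e2 - vv * e1 ≠ 0 := by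
    by_cases hu : uu = 0
    · have hv : vv ≠ 0 := by
        intro hv
        have hz : (![uu^2, uu*vv, vv^2] : Fin 3 → K) = 0 := by
          rw [vec_eq_zero_iff]
          refine ⟨?_, ?_, ?_⟩ <;> simp only [mat0, mat1, mat2] <;> simp [hu, hv]
        rw [hz] at hw
        exact smul_ne_zero hρ p.rep_nonzero hw.symm
      exact ⟨1, 0, by simp only [mul_zero, mul_one, zero_sub]; exact neg_ne_zero.mpr hv⟩
    · exact ⟨0, 1, by simp only [mul_one, mul_zero, sub_zero]; exact hu⟩
  have hUV : ¬(uu = 0 ∧ vv = 0) := by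
    rintro ⟨h, h'⟩; apply hD; rw [h, h']; ring
  have hns4 : ¬ IsSquare (n0 * (uu * e2 - vv * e1) ^ 4) := by
    have hrw : n0 * (uu * e2 - vv * e1) ^ 4 = ((uu * e2 - vv * e1) ^ 2) ^ 2 * n0 := by ring
    rw [hrw, isSquare_sq_mul _ _ (pow_ne_zero 2 hD)]
    exact hn0
  have hn0D : n0 * (uu * e2 - vv * e1) ^ 4 ≠ 0 := mul_ne_zero hn0ne (pow_ne_zero 4 hD)
  have hcne : ∀ β : K, cvec n0 uu vv e1 e2 β ≠ 0 := by
    intro β h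
    apply hn0D
    rw [← Qf_cvec n0 uu vv e1 e2 β, h]
    simp [Qf]
  set φ : K → Pt K := fun β => Projectivization.mk K (cvec n0 uu vv e1 e2 β) (hcne β) with hφ
  have hφinj : Function.Injective φ := by
    intro β β' hEq
    rw [hφ] at hEq
    simp only at hEq
    rw [Projectivization.mk_eq_mk_iff] at hEq
    obtain ⟨u, hu⟩ := hEq
    rw [Units.smul_def] at hu
    have hBeq : (u : K) * (-(uu * e2 - vv * e1) ^ 2) = -(uu * e2 - vv * e1) ^ 2 := by
      have hq := congrArg (Bf ![uu^2, uu*vv, vv^2]) hu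
      rw [Bf_smul_right, Bf_w_cvec, Bf_w_cvec] at hq
      exact hq
    have hone : (u : K) = 1 := by
      have hD2 : -(uu * e2 - vv * e1) ^ 2 ≠ 0 := neg_ne_zero.mpr (pow_ne_zero 2 hD)
      exact mul_right_cancel₀ hD2 (by rw [hBeq, one_mul])
    rw [hone, one_smul] at hu
    have c0 := congrFun hu 0
    have c1 := congrFun hu 1
    have c2 := congrFun hu 2
    simp only [cvec, mat0, mat1, mat2] at c0 c1 c2
    have hkey : ((β - β') * (uu * e2 - vv * e1)) ^ 2 = 0 := by
      linear_combination (-((β' * vv + e2) ^ 2)) * c0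
        + (2 * (β' * uu + e1) * (β' * vv + e2)) * c1 + (-((β' * uu + e1) ^ 2)) * c2
    have hsub : (β - β') * (uu * e2 - vv * e1) = 0 := pow_eq_zero_iff (n := 2) (by norm_num) |>.mp hkey
    have hββ : β - β' = 0 := (mul_eq_zero.mp hsub).resolve_right hD
    exact sub_eq_zero.mp hββ
  refine ⟨Finset.image φ Finset.univ, ?_, ?_, ?_⟩
  · intro x hx
    obtain ⟨β, _, rfl⟩ := Finset.mem_image.mp hx
    apply internal_of_nonsquare h2
    obtain ⟨c, hc, hrep⟩ := rep_mk (cvec n0 uu vv e1 e2 β) (hcne β)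
    have hφrep : (φ β).rep = c • cvec n0 uu vv e1 e2 β := by
      rw [hφ]; exact hrep
    rw [hφrep, Qf_smul, Qf_cvec]
    have hrw : c ^ 2 * (n0 * (uu * e2 - vv * e1) ^ 4) = (c * (uu * e2 - vv * e1) ^ 2) ^ 2 * n0 := by ring
    rw [hrw, isSquare_sq_mul _ _ (mul_ne_zero hc (pow_ne_zero 2 hD))]
    exact hn0
  · rw [Finset.card_image_of_injective _ hφinj, Finset.card_univ]
    exact hodd
  · intro q0 hq0ext hq0inc
    have hBra : Bf p.rep q0.rep = 0 := incid_perp h2 p q0 hq0inc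
    have hBwa : Bf ![uu^2, uu*vv, vv^2] q0.rep = 0 := by
      rw [hw, Bf_smul_left, hBra, mul_zero]
    have hQa : Qf q0.rep ≠ 0 := by
      intro hQa0
      obtain ⟨k, hk, hka⟩ := pt_on_tangent_conic uu vv hUV q0.rep q0.rep_nonzero hQa0 hBwa
      have hq0p : q0 = p := by
        rw [← q0.mk_rep, ← p.mk_rep, Projectivization.mk_eq_mk_iff]
        refine ⟨Units.mk0 (k * ρ) (mul_ne_zero hk hρ), ?_⟩
        rw [Units.smul_def, Units.val_mk0, ← smul_smul, ← hw, ← hka]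
      exact not_external_conic h2 p hp (hq0p ▸ hq0ext)
    have hbb2 : (2 * (q0.rep 2 * uu * e1 + q0.rep 0 * vv * e2 - q0.rep 1 * (uu * e2 + vv * e1))) ^ 2 = 4 * Qf q0.rep * (uu * e2 - vv * e1) ^ 2 := bb_sq uu vv e1 e2 q0.rep hBwa
    have hbbne : (2 * (q0.rep 2 * uu * e1 + q0.rep 0 * vv * e2 - q0.rep 1 * (uu * e2 + vv * e1))) ≠ 0 := by
      intro h
      have hzero : (4 : K) * Qf q0.rep * (uu * e2 - vv * e1) ^ 2 = 0 := by rw [← hbb2, h]; ring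
      rcases mul_eq_zero.mp hzero with h' | h'
      · rcases mul_eq_zero.mp h' with h'' | h''
        · apply h2
          exact mul_self_eq_zero.mp (by rw [show (2:K) * 2 = (4:K) by norm_num, h''])
        · exact hQa h''
      · exact hD (pow_eq_zero_iff (n := 2) (by norm_num) |>.mp h')
    have hmns : ¬ IsSquare (-(4 * Qf q0.rep * (n0 * (uu * e2 - vv * e1) ^ 4))) := by
      have hm' : ((2 * (q0.rep 2 * uu * e1 + q0.rep 0 * vv * e2 - q0.rep 1 * (uu * e2 + vv * e1))) * (uu * e2 - vv * e1)) ^ 2 = 4 * Qf q0.rep * (uu * e2 - vv * e1) ^ 4 := by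
        linear_combination (uu * e2 - vv * e1) ^ 2 * hbb2
      have hrw : -(4 * Qf q0.rep * (n0 * (uu * e2 - vv * e1) ^ 4)) = (i * ((2 * (q0.rep 2 * uu * e1 + q0.rep 0 * vv * e2 - q0.rep 1 * (uu * e2 + vv * e1))) * (uu * e2 - vv * e1))) ^ 2 * n0 := by
        linear_combination n0 * hm' + (n0 * (2 * (q0.rep 2 * uu * e1 + q0.rep 0 * vv * e2 - q0.rep 1 * (uu * e2 + vv * e1))) ^ 2 * (uu * e2 - vv * e1) ^ 2) * hi
      rw [hrw, isSquare_sq_mul _ _ (mul_ne_zero hine (mul_ne_zero hbbne hD))]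
      exact hn0
    have hpt : ∀ β : K, Passant (lineThrough q0 (φ β)) ↔
        ¬ IsSquare (((2 * (q0.rep 2 * uu * e1 + q0.rep 0 * vv * e2 - q0.rep 1 * (uu * e2 + vv * e1))) * β + (q0.rep 2 * e1 ^ 2 + q0.rep 0 * e2 ^ 2 - 2 * q0.rep 1 * e1 * e2)) ^ 2 - 4 * Qf q0.rep * (n0 * (uu * e2 - vv * e1) ^ 4)) := by
      intro β
      obtain ⟨c, hc, hrep⟩ := rep_mk (cvec n0 uu vv e1 e2 β) (hcne β)
      have hφrep : (φ β).rep = c • cvec n0 uu vv e1 e2 β := by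
        rw [hφ]; exact hrep
      have hcross0 : crossVec q0.rep (cvec n0 uu vv e1 e2 β) ≠ 0 := by
        intro hzero
        obtain ⟨k, hk, hka⟩ := cross_zero_dep q0.rep (cvec n0 uu vv e1 e2 β)
          q0.rep_nonzero (hcne β) hzero
        have hQaeq : Qf q0.rep = k ^ 2 * (n0 * (uu * e2 - vv * e1) ^ 4) := by
          rw [hka, Qf_smul, Qf_cvec]
        apply hn0
        refine ⟨(2 * (q0.rep 2 * uu * e1 + q0.rep 0 * vv * e2 - q0.rep 1 * (uu * e2 + vv * e1))) / (2 * k * (uu * e2 - vv * e1) ^ 3), ?_⟩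
        rw [div_mul_div_comm, eq_div_iff (mul_ne_zero (mul_ne_zero (mul_ne_zero h2 hk) (pow_ne_zero 3 hD)) (mul_ne_zero (mul_ne_zero h2 hk) (pow_ne_zero 3 hD)))]
        linear_combination (-1 : K) * hbb2 + (-(4 * (uu * e2 - vv * e1) ^ 2)) * hQaeq
      have hcrossrep : crossVec q0.rep (φ β).rep ≠ 0 := by
        rw [hφrep, crossVec_smul_right]
        intro h
        exact hcross0 ((smul_eq_zero.mp h).resolve_left hc)
      have hline : lineThrough q0 (φ β) =
          Projectivization.mk K (crossVec q0.rep (φ β).rep) hcrossrep := by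
        unfold lineThrough
        rw [dif_pos hcrossrep]
      rw [hline, passant_iff h2]
      obtain ⟨c', hc', hrep'⟩ := rep_mk (crossVec q0.rep (φ β).rep) hcrossrep
      have hdval : dsc (crossVec q0.rep (cvec n0 uu vv e1 e2 β)) =
          ((2 * (q0.rep 2 * uu * e1 + q0.rep 0 * vv * e2 - q0.rep 1 * (uu * e2 + vv * e1))) * β + (q0.rep 2 * e1 ^ 2 + q0.rep 0 * e2 ^ 2 - 2 * q0.rep 1 * e1 * e2)) ^ 2 - 4 * Qf q0.rep * (n0 * (uu * e2 - vv * e1) ^ 4) := by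
        rw [dsc_cross, Bf_a_cvec n0 uu vv e1 e2 β q0.rep hBwa, Qf_cvec]
        ring
      rw [hrep', dsc_smul, hφrep, crossVec_smul_right, dsc_smul, hdval,
        show c' ^ 2 * (c ^ 2 * (((2 * (q0.rep 2 * uu * e1 + q0.rep 0 * vv * e2 - q0.rep 1 * (uu * e2 + vv * e1))) * β + (q0.rep 2 * e1 ^ 2 + q0.rep 0 * e2 ^ 2 - 2 * q0.rep 1 * e1 * e2)) ^ 2 - 4 * Qf q0.rep * (n0 * (uu * e2 - vv * e1) ^ 4)))
            = (c' * c) ^ 2 * (((2 * (q0.rep 2 * uu * e1 + q0.rep 0 * vv * e2 - q0.rep 1 * (uu * e2 + vv * e1))) * β + (q0.rep 2 * e1 ^ 2 + q0.rep 0 * e2 ^ 2 - 2 * q0.rep 1 * e1 * e2)) ^ 2 - 4 * Qf q0.rep * (n0 * (uu * e2 - vv * e1) ^ 4)) from by ring,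
        isSquare_sq_mul _ _ (mul_ne_zero hc' hc)]
    have himg : (Finset.image φ Finset.univ).filter (fun x => Passant (lineThrough q0 x))
        = Finset.image φ (Finset.univ.filter fun β => Passant (lineThrough q0 (φ β))) :=
      Finset.filter_image
    rw [himg, Finset.card_image_of_injective _ hφinj,
      Finset.filter_congr (fun β _ => hpt β)]
    exact odd_filter_card h2 (2 * (q0.rep 2 * uu * e1 + q0.rep 0 * vv * e2 - q0.rep 1 * (uu * e2 + vv * e1))) (q0.rep 2 * e1 ^ 2 + q0.rep 0 * e2 ^ 2 - 2 * q0.rep 1 * e1 * e2) (4 * Qf q0.rep * (n0 * (uu * e2 - vv * e1) ^ 4)) hbbne hmns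


end ConicCode
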